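/- arXiv:2412.07939 — 4 statements merged into one kernel-verified Lean document; each statement's English description precedes it below -/
import Mathlib

section
/- For any m×n Boolean matrix Λ with m,n ≥ 1, the inspection of the episodic inverse Λ* succeeds if and only if the inspection of Λ fails. Equivalently, δ⟨Λ*⟩ = ¬δ⟨Λ⟩. -/
/-- One step of the inspection walk (0-based indexing): move right on `true`,
down on `false`. -/
def step (Λ : ℕ → ℕ → Bool) (pq : ℕ × ℕ) : ℕ × ℕ :=
  if Λ pq.1 pq.2 then (pq.1, pq.2 + 1) else (pq.1 + 1, pq.2)

/-- Guarded inspection walk on an `m × n` Boolean matrix: stop as soon as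
`p = m` or `q = n` (0-based, corresponding to `p = m+1` or `q = n+1` in
1-based notation). -/
def walk (m n : ℕ) (Λ : ℕ → ℕ → Bool) : ℕ → ℕ × ℕ → ℕ × ℕ
  | 0, pq => pq
  | fuel + 1, pq =>
      if pq.1 = m ∨ pq.2 = n then pq else walk m n Λ fuel (step Λ pq)

/-- Final position of the inspection walk started at `(0,0)`; fuel `m + n`
always suffices. -/
def finalPos (m n : ℕ) (Λ : ℕ → ℕ → Bool) : ℕ × ℕ := walk m n Λ (m + n) (0, 0)

/-- `F(Λ)`: the number of downward moves (`p' - 1` in 1-based notation). -/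
def Fv (m n : ℕ) (Λ : ℕ → ℕ → Bool) : ℕ := (finalPos m n Λ).1

/-- `S(Λ)`: the number of rightward moves (`q' - 1` in 1-based notation). -/
def Sv (m n : ℕ) (Λ : ℕ → ℕ → Bool) : ℕ := (finalPos m n Λ).2

/-- Episodic inverse: transpose of the entrywise negation. -/
def einv (Λ : ℕ → ℕ → Bool) : ℕ → ℕ → Bool := fun i j => !(Λ j i)

/-- Reduction of the inspection: `true` iff the walk succeeds. -/
def delta (m n : ℕ) (Λ : ℕ → ℕ → Bool) : Bool := decide (Sv m n Λ = n)

lemma walk_swap (m n : ℕ) (Λ : ℕ → ℕ → Bool) :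
    ∀ fuel p q, walk n m (einv Λ) fuel (q, p) =
      ((walk m n Λ fuel (p, q)).2, (walk m n Λ fuel (p, q)).1) := by
  intro fuel
  induction fuel with
  | zero => intro p q; simp [walk]
  | succ f ih =>
    intro p q
    simp only [walk]
    by_cases h : p = m ∨ q = n
    · have h' : q = n ∨ p = m := h.symm
      simp [h, h']
    · push_neg at h
      have h' : ¬ (q = n ∨ p = m) := by tauto
      have h'' : ¬ (p = m ∨ q = n) := by tauto
      simp only [h', h'', if_neg, ite_false]
      cases hpq : Λ p q <;> simp [step, einv, hpq, ih]

lemma walk_spec (m n : ℕ) (Λ : ℕ → ℕ → Bool) :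
    ∀ fuel p q, p ≤ m → q ≤ n → ¬(p = m ∧ q = n) →
      (m - p) + (n - q) ≤ fuel + 1 →
      ((walk m n Λ fuel (p, q)).1 = m ∧ (walk m n Λ fuel (p, q)).2 < n) ∨
      ((walk m n Λ fuel (p, q)).1 < m ∧ (walk m n Λ fuel (p, q)).2 = n) := by
  intro fuel
  induction fuel with
  | zero =>
    intro p q hp hq hne hf
    simp only [walk]
    rcases eq_or_lt_of_le hp with hp' | hp'
    · exact Or.inl ⟨hp', lt_of_le_of_ne hq (fun h => hne ⟨hp', h⟩)⟩
    · exact Or.inr ⟨hp', by omega⟩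
  | succ f ih =>
    intro p q hp hq hne hf
    simp only [walk]
    by_cases h : p = m ∨ q = n
    · simp only [h, if_true]
      rcases h with h | h
      · exact Or.inl ⟨h, lt_of_le_of_ne hq (fun h2 => hne ⟨h, h2⟩)⟩
      · exact Or.inr ⟨lt_of_le_of_ne hp (fun h2 => hne ⟨h2, h⟩), h⟩
    · push_neg at h
      simp only [h, not_or, if_neg, ite_false]
      have h1 : p < m := lt_of_le_of_ne hp h.1
      have h2 : q < n := lt_of_le_of_ne hq h.2
      cases hpq : Λ p q
      · have hs : step Λ (p, q) = (p + 1, q) := by simp [step, hpq]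
        rw [hs]
        exact ih (p+1) q (by omega) hq (by omega) (by omega)
      · have hs : step Λ (p, q) = (p, q + 1) := by simp [step, hpq]
        rw [hs]
        exact ih p (q+1) hp (by omega) (by omega) (by omega)

/-- inspection of the episodic inverse `Λ*` (an `n × m`
matrix) succeeds iff inspection of `Λ` fails: `δ⟨Λ*⟩ = ¬δ⟨Λ⟩`. -/
theorem delta_einv (m n : ℕ) (hm : 1 ≤ m) (hn : 1 ≤ n) (Λ : ℕ → ℕ → Bool) :
    delta n m (einv Λ) = !(delta m n Λ) := by
  have hswap : finalPos n m (einv Λ) = ((finalPos m n Λ).2, (finalPos m n Λ).1) := by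
    have := walk_swap m n Λ (m + n) 0 0
    simpa [finalPos, Nat.add_comm] using this
  have hspec := walk_spec m n Λ (m + n) 0 0 (Nat.zero_le _) (Nat.zero_le _)
    (by omega) (by omega)
  rw [show ((0, 0) : ℕ × ℕ) = 0 from rfl] at hspec
  simp only [delta, Sv, hswap]
  show decide ((walk m n Λ (m + n) 0).1 = m) = !decide ((walk m n Λ (m + n) 0).2 = n)
  rcases hspec with ⟨h1, h2⟩ | ⟨h1, h2⟩
  · simp [h1, Nat.ne_of_lt h2]
  · simp [h2, Nat.ne_of_lt h1]
end

section
/- For any non-empty m×n Boolean matrix Λ (m,n ≥ 1), S(Λ) = F(Λ*) and F(Λ) = S(Λ*), where Λ* is the transpose of the entrywise negation of Λ. -/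
lemma walk_einv (m n : ℕ) (Λ : ℕ → ℕ → Bool) :
    ∀ fuel pq, walk n m (einv Λ) fuel (Prod.swap pq) = Prod.swap (walk m n Λ fuel pq) := by
  intro fuel
  induction fuel with
  | zero => intro pq; simp [walk]
  | succ k ih =>
      intro pq
      simp only [walk, Prod.swap, Prod.fst, Prod.snd]
      by_cases h : pq.1 = m ∨ pq.2 = n
      · rw [if_pos h.symm, if_pos h]
      · rw [if_neg (fun hc => h hc.symm), if_neg h]
        have hstep : step (einv Λ) (pq.2, pq.1) = Prod.swap (step Λ pq) := by
          simp only [step, einv]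
          by_cases hΛ : Λ pq.1 pq.2 = true <;> simp [hΛ]
        rw [hstep, ih]
        rfl

/-- for a non-empty matrix, `S(Λ) = F(Λ*)` and
`F(Λ) = S(Λ*)`. -/
theorem S_F_einv (m n : ℕ) (hm : 1 ≤ m) (hn : 1 ≤ n) (Λ : ℕ → ℕ → Bool) :
    Sv m n Λ = Fv n m (einv Λ) ∧ Fv m n Λ = Sv n m (einv Λ) := by
  have h := walk_einv m n Λ (m + n) (0, 0)
  constructor <;>
  · simp only [Sv, Fv, finalPos, Nat.add_comm n m]
    rw [show ((0:ℕ),(0:ℕ)) = Prod.swap ((0:ℕ),(0:ℕ)) from rfl, h]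
    rfl
end

section
/- Inspection is monotone: if Λ and Λ' are m×n Boolean matrices with Λ(i,j) → Λ'(i,j) for all entries (i.e. every true entry of Λ is true in Λ'), and the inspection of Λ succeeds, then the inspection of Λ' succeeds. -/
theorem walk_mono_key (m n : ℕ) (Λ Λ' : ℕ → ℕ → Bool)
    (h : ∀ i < m, ∀ j < n, Λ i j = true → Λ' i j = true) :
    ∀ fuel p q p' q', p ≤ m → q ≤ n → q' ≤ n → p' + q' = p + q → q ≤ q' →
      (walk m n Λ fuel (p, q)).2 = n → (walk m n Λ' fuel (p', q')).2 = n := by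
  intro fuel
  induction fuel with
  | zero =>
    intro p q p' q' hp hq hq'n hsum hqq hw
    simp only [walk] at hw ⊢
    omega
  | succ fuel ih =>
    intro p q p' q' hp hq hq'n hsum hqq hw
    rw [walk]
    by_cases hstop' : p' = m ∨ q' = n
    · rw [if_pos hstop']
      rcases hstop' with hpm | hqn
      · have hpm' : p = m := by omega
        rw [walk, if_pos (Or.inl hpm')] at hw
        simpa using by omega
      · exact hqn
    · rw [if_neg hstop']
      have hq'lt : q' < n := by omega
      have hqlt : q < n := by omega
      have hplt : p < m := by
        by_cases hpm : p = m
        · rw [walk, if_pos (Or.inl hpm)] at hw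
          simp at hw; omega
        · omega
      rw [walk, if_neg (by simp; omega)] at hw
      simp only [step] at hw ⊢
      by_cases hΛ : Λ p q = true
      · rw [if_pos hΛ] at hw
        by_cases hΛ' : Λ' p' q' = true
        · rw [if_pos hΛ']
          exact ih p (q+1) p' (q'+1) (by omega) (by omega) (by omega) (by omega)
            (by omega) hw
        · rw [if_neg hΛ']
          have hqlt' : q < q' := by
            rcases lt_or_eq_of_le hqq with h1 | h1
            · exact h1
            · exfalso
              have hp' : p' = p := by omega
              exact hΛ' (by rw [hp', ← h1]; exact h p hplt q hqlt hΛ)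
          exact ih p (q+1) (p'+1) q' (by omega) (by omega) (by omega) (by omega)
            (by omega) hw
      · rw [if_neg hΛ] at hw
        by_cases hΛ' : Λ' p' q' = true
        · rw [if_pos hΛ']
          exact ih (p+1) q p' (q'+1) (by omega) (by omega) (by omega) (by omega)
            (by omega) hw
        · rw [if_neg hΛ']
          exact ih (p+1) q (p'+1) q' (by omega) (by omega) (by omega) (by omega)
            (by omega) hw

/-- inspection is monotone: if every true entry of `Λ` is true
in `Λ'` and inspection of `Λ` succeeds, so does inspection of `Λ'`. -/
theorem inspection_monotone (m n : ℕ) (Λ Λ' : ℕ → ℕ → Bool)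
    (h : ∀ i < m, ∀ j < n, Λ i j = true → Λ' i j = true)
    (hs : Sv m n Λ = n) : Sv m n Λ' = n := by
  exact walk_mono_key m n Λ Λ' h (m + n) 0 0 0 0 (by omega) (by omega) (by omega)
    (by omega) (by omega) hs
end

section
/- Path characterization of successful inspection: the inspection of an m×n Boolean matrix Λ (m,n ≥ 1) succeeds if there exists a weakly increasing function r : Fin n → Fin m such that Λ(r(j), j) = true for all columns j. (The greedy inspection walk stays weakly above any such witnessing path: at each column j the walk's row index is at most r(j).) -/
/-- if there is a weakly increasing path `r : Fin n → Fin m`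
with `Λ (r j) j = true` for every column `j`, then inspection succeeds. -/
theorem inspection_of_staircase (m n : ℕ) (hm : 1 ≤ m) (hn : 1 ≤ n)
    (Λ : ℕ → ℕ → Bool) (r : Fin n → Fin m)
    (hmono : ∀ j j' : Fin n, j ≤ j' → r j ≤ r j')
    (hr : ∀ j : Fin n, Λ (r j) j = true) :
    Sv m n Λ = n := by
  have key : ∀ fuel p q, q ≤ n → (∀ hq : q < n, p ≤ (r ⟨q, hq⟩ : ℕ)) →
      m + n ≤ fuel + p + q → (walk m n Λ fuel (p, q)).2 = n := by
    intro fuel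
    induction fuel with
    | zero =>
      intro p q hq hinv hfuel
      simp only [walk]
      by_contra h
      have hq' : q < n := lt_of_le_of_ne hq h
      have := hinv hq'
      have hm' : p < m := lt_of_le_of_lt this (r ⟨q, hq'⟩).isLt
      omega
    | succ fuel ih =>
      intro p q hq hinv hfuel
      rw [walk]
      by_cases hqn : q = n
      · simp [hqn]
      · have hq' : q < n := lt_of_le_of_ne hq hqn
        have hpr := hinv hq'
        have hpm : p < m := lt_of_le_of_lt hpr (r ⟨q, hq'⟩).isLt
        have hcond : ¬ ((p, q).1 = m ∨ (p, q).2 = n) := by simp; omega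
        rw [if_neg hcond]
        unfold step
        by_cases hΛ : Λ p q = true
        · simp only [hΛ, if_true]
          apply ih
          · omega
          · intro hq2
            calc p ≤ (r ⟨q, hq'⟩ : ℕ) := hpr
              _ ≤ (r ⟨q + 1, hq2⟩ : ℕ) := by
                  exact_mod_cast hmono ⟨q, hq'⟩ ⟨q + 1, hq2⟩ (by simp)
          · omega
        · simp only [hΛ, if_false]
          apply ih
          · exact hq
          · intro hq2
            have : p ≠ (r ⟨q, hq'⟩ : ℕ) := by
              intro he
              rw [he] at hΛ
              exact hΛ (hr ⟨q, hq'⟩)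
            have : p < (r ⟨q, hq'⟩ : ℕ) := lt_of_le_of_ne hpr this
            have : (r ⟨q, hq2⟩ : ℕ) = (r ⟨q, hq'⟩ : ℕ) := rfl
            omega
          · omega
  have h0 : (0 : ℕ) ≤ (r ⟨0, hn⟩ : ℕ) := Nat.zero_le _
  simpa [Sv, finalPos] using key (m + n) 0 0 (Nat.zero_le n) (fun hq => Nat.zero_le _) (by omega)
end
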